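/- Suppose W and U are operators of diagonal type on L²(𝕋) and U is unitary. Then the average trace 𝐓(W) = limsup_{#I→∞} (1/#I) Σ_{l∈I, j∈ℤ} |W_{l,j}|² (over integer intervals I) satisfies 𝐓(WU) = 𝐓(W) = 𝐓(UW); in particular 𝐓(U⁻¹WU) = 𝐓(W). -/

import Mathlib

open MeasureTheory Real Filter
open scoped ENNReal

namespace MuNorm

local instance : Fact (0 < 2 * π) := ⟨by positivity⟩

/-- The Hilbert space `L²(𝕋)` with respect to normalized Haar measure on the circle. -/
noncomputable abbrev HT :=
  Lp ℂ 2 (@AddCircle.haarAddCircle (2 * π) _)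

/-- The matrix of an operator on `L²(𝕋)` in the Fourier basis. -/
noncomputable def Wmat (W : HT →L[ℂ] HT) (j k : ℤ) : ℂ :=
  fourierBasis.repr (W (fourierBasis k)) j

/-- `W` is of diagonal type: its Fourier matrix is majorated by a summable sequence
`c` along diagonals. -/
def IsDT (W : HT →L[ℂ] HT) : Prop :=
  ∃ c : ℤ → ℝ, (∀ s, 0 ≤ c s) ∧ Summable c ∧ ∀ j k, ‖Wmat W j k‖ ≤ c (j - k)

/-- `‖W‖_DT`: the infimum of `∑ c_s` over majorating sequences. -/
noncomputable def dtNorm (W : HT →L[ℂ] HT) : ℝ :=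
  sInf {t | ∃ c : ℤ → ℝ, (∀ s, 0 ≤ c s) ∧ Summable c ∧
    (∀ j k, ‖Wmat W j k‖ ≤ c (j - k)) ∧ t = ∑' s, c s}


/-- The average trace `𝐓(W)` of `W*W`: the limsup of
`(1/#I) ∑_{l ∈ I, j ∈ ℤ} |W_{l,j}|²` over integer intervals `I = [a, a + N)`
as the length `N` tends to infinity. -/
noncomputable def bT (W : HT →L[ℂ] HT) : ℝ :=
  Filter.limsup
    (fun p : ℤ × ℕ =>
      (1 / (p.2 : ℝ)) * ∑ l ∈ Finset.Ico p.1 (p.1 + (p.2 : ℤ)), ∑' j : ℤ, ‖Wmat W l j‖ ^ 2)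
    (Filter.comap Prod.snd Filter.atTop)

/-!
Right multiplication by a unitary `U` leaves every row sum `∑_j |W_{l,j}|² = ‖W* e_l‖²` unchanged,
because `(WU)* = U* W*` and `U*` is an isometry. Left multiplication by `U` preserves the column
sums `‖W e_k‖²` instead, and for matrices of diagonal type column sums control row sums on
average: if `|A_{j,k}| ≤ d_{j-k}` with `d` summable, the mass of the rows indexed by an interval
`I` of length `N` and that of the columns indexed by `I` differ only by what crosses the boundary
of `I`, at most `∑_s d_s min(|s|, N) = o(N)`. Since `UW` is again of diagonal type (its profile is
a convolution), `𝐓(UW) = 𝐓(W)`. Finally `U⁻¹ = U*` is of diagonal type and `U⁻¹WU = (U*W)U`.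
-/

open Finset
open ContinuousLinearMap (adjoint adjoint_comp)
open scoped InnerProductSpace ComplexConjugate Topology

theorem _root_.HilbertBasis.hasSum_norm_sq_repr {ι 𝕜 E : Type*} [RCLike 𝕜] [NormedAddCommGroup E]
    [InnerProductSpace 𝕜 E] (b : HilbertBasis ι 𝕜 E) (x : E) :
    HasSum (fun i => ‖b.repr x i‖ ^ 2) (‖x‖ ^ 2) := by
  simpa using lp.hasSum_norm (p := 2) (by norm_num) (b.repr x)

theorem _root_.Filter.limsup_le_limsup_of_tendsto_sub {ι : Type*} {F : Filter ι} [F.NeBot]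
    {u v : ι → ℝ} (hv : IsBoundedUnder (· ≤ ·) F v) (hv' : IsBoundedUnder (· ≥ ·) F v)
    (h : Tendsto (u - v) F (𝓝 0)) :
    limsup u F ≤ limsup v F := by
  calc limsup u F = limsup (v + (u - v)) F := by rw [add_sub_cancel]
    _ ≤ limsup v F + limsup (u - v) F :=
        limsup_add_le hv' hv h.isCoboundedUnder_le h.isBoundedUnder_le
    _ = limsup v F := by rw [h.limsup_eq, add_zero]

theorem _root_.Filter.limsup_eq_limsup_of_tendsto_sub {ι : Type*} {F : Filter ι} [F.NeBot]
    {u v : ι → ℝ} (hu : IsBoundedUnder (· ≤ ·) F u) (hu' : IsBoundedUnder (· ≥ ·) F u)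
    (hv : IsBoundedUnder (· ≤ ·) F v) (hv' : IsBoundedUnder (· ≥ ·) F v)
    (h : Tendsto (u - v) F (𝓝 0)) :
    limsup u F = limsup v F :=
  le_antisymm (limsup_le_limsup_of_tendsto_sub hv hv' h)
    (limsup_le_limsup_of_tendsto_sub hu hu' (by rw [← neg_sub, ← neg_zero]; exact h.neg))

section DiagonalMajorant

variable {A : ℤ → ℤ → ℝ} {d : ℤ → ℝ}

theorem card_filter_sub_notMem_Ico_le (a s : ℤ) (N : ℕ) :
    #{j ∈ Ico a (a + N) | j - s ∉ Ico a (a + N)} ≤ min s.natAbs N := by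
  refine le_min ?_ ((card_filter_le _ _).trans (by simp))
  calc #{j ∈ Ico a (a + N) | j - s ∉ Ico a (a + N)}
      ≤ #(Ico a (a + s) ∪ Ico (a + N + s) (a + N)) := by
        refine card_le_card fun j => ?_
        simp only [mem_filter, mem_Ico, mem_union]
        omega
    _ ≤ s.natAbs := by
        refine (card_union_le _ _).trans ?_
        simp only [Int.card_Ico]
        omega

theorem sum_tsum_indicator_compl_Ico_le (hA0 : ∀ j k, 0 ≤ A j k) (hd : Summable d)
    (hAd : ∀ j k, A j k ≤ d (j - k)) (a : ℤ) (N : ℕ) :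
    ∑ j ∈ Ico a (a + N), ∑' k, (↑(Ico a (a + N)) : Set ℤ)ᶜ.indicator (A j) k ≤
      ∑' s, d s * (min s.natAbs N : ℕ) := by
  set I := Ico a (a + (N : ℤ))
  have hd0 (s : ℤ) : 0 ≤ d s := (hA0 s 0).trans (by simpa using hAd s 0)
  have hrow (j : ℤ) : Summable fun k => d (j - k) := (Equiv.subLeft j).summable_iff.2 hd
  have hleak (j : ℤ) (s : ℤ) :
      (↑I : Set ℤ)ᶜ.indicator (fun k => d (j - k)) (j - s) = if j - s ∈ I then 0 else d s := by
    by_cases h : j - s ∈ I <;> simp [h]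
  calc ∑ j ∈ I, ∑' k, (↑I : Set ℤ)ᶜ.indicator (A j) k
      ≤ ∑ j ∈ I, ∑' k, (↑I : Set ℤ)ᶜ.indicator (fun k => d (j - k)) k := by
        refine sum_le_sum fun j _ => Summable.tsum_le_tsum
          (fun k => Set.indicator_le_indicator (hAd j k)) ?_ ((hrow j).indicator _)
        exact ((hrow j).indicator _).of_nonneg_of_le
          (Set.indicator_nonneg fun k _ => hA0 j k) fun k => Set.indicator_le_indicator (hAd j k)
    _ = ∑ j ∈ I, ∑' s, if j - s ∈ I then 0 else d s := by
        refine sum_congr rfl fun j _ => ?_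
        rw [← (Equiv.subLeft j).tsum_eq]
        exact tsum_congr (hleak j)
    _ = ∑' s, ∑ j ∈ I, if j - s ∈ I then 0 else d s := by
        refine (Summable.tsum_finsetSum fun j _ => hd.of_nonneg_of_le
          (fun s => by split_ifs <;> simp [hd0]) fun s => by split_ifs <;> simp [hd0]).symm
    _ = ∑' s, d s * #{j ∈ I | j - s ∉ I} := by
        refine tsum_congr fun s => ?_
        rw [sum_ite, sum_const_zero, zero_add, sum_const, nsmul_eq_mul, mul_comm]
    _ ≤ ∑' s, d s * (min s.natAbs N : ℕ) := by
        have hweighted (w : ℤ → ℕ) (hw : ∀ s, w s ≤ N) : Summable fun s => d s * w s :=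
          (hd.mul_right (N : ℝ)).of_nonneg_of_le (fun s => mul_nonneg (hd0 s) (w s).cast_nonneg)
            fun s => mul_le_mul_of_nonneg_left (Nat.cast_le.2 (hw s)) (hd0 s)
        refine Summable.tsum_le_tsum (fun s => mul_le_mul_of_nonneg_left ?_ (hd0 s))
          (hweighted _ fun s => (card_filter_le _ _).trans (by simp [I]))
          (hweighted _ fun s => min_le_right _ _)
        exact_mod_cast card_filter_sub_notMem_Ico_le a s N

theorem abs_sum_tsum_sub_sum_tsum_Ico_le (hA0 : ∀ j k, 0 ≤ A j k) (hd : Summable d)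
    (hAd : ∀ j k, A j k ≤ d (j - k)) (a : ℤ) (N : ℕ) :
    |∑ j ∈ Ico a (a + N), ∑' k, A j k - ∑ k ∈ Ico a (a + N), ∑' j, A j k| ≤
      ∑' s, d s * (min s.natAbs N : ℕ) := by
  set I := Ico a (a + (N : ℤ))
  have hsplit (f : ℤ → ℝ) (hf : Summable f) :
      ∑' k, f k = ∑ k ∈ I, f k + ∑' k, (↑I : Set ℤ)ᶜ.indicator f k := by
    rw [← _root_.tsum_subtype, hf.sum_add_tsum_compl]
  have hrow (j : ℤ) : Summable (A j) :=
    ((Equiv.subLeft j).summable_iff.2 hd).of_nonneg_of_le (hA0 j) (hAd j)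
  have hcol (k : ℤ) : Summable (A · k) :=
    ((Equiv.subRight k).summable_iff.2 hd).of_nonneg_of_le (hA0 · k) (hAd · k)
  have hleak_nonneg (B : ℤ → ℤ → ℝ) (hB0 : ∀ j k, 0 ≤ B j k) :
      0 ≤ ∑ j ∈ I, ∑' k, (↑I : Set ℤ)ᶜ.indicator (B j) k :=
    sum_nonneg fun j _ => tsum_nonneg fun k => Set.indicator_nonneg (fun k _ => hB0 j k) k
  have hleak_transpose : ∑ k ∈ I, ∑' j, (↑I : Set ℤ)ᶜ.indicator (A · k) j ≤
      ∑' s, d s * (min s.natAbs N : ℕ) := by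
    have := sum_tsum_indicator_compl_Ico_le (A := fun k j => A j k) (d := fun s => d (-s))
      (fun k j => hA0 j k) ((Equiv.neg ℤ).summable_iff.2 hd) (fun k j => by simpa using hAd j k)
      a N
    rw [← (Equiv.neg ℤ).tsum_eq fun s => d s * (min s.natAbs N : ℕ)]
    simpa only [Equiv.neg_apply, Int.natAbs_neg] using this
  rw [sum_congr rfl fun j _ => hsplit _ (hrow j), sum_congr rfl fun k _ => hsplit _ (hcol k),
    sum_add_distrib, sum_add_distrib, sum_comm, add_sub_add_left_eq_sub]
  exact abs_sub_le_of_nonneg_of_le (hleak_nonneg A hA0)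
    (sum_tsum_indicator_compl_Ico_le hA0 hd hAd a N) (hleak_nonneg _ fun k j => hA0 j k)
    hleak_transpose

theorem tendsto_tsum_mul_min_natAbs_div (hd : Summable d) :
    Tendsto (fun N : ℕ => (∑' s, d s * (min s.natAbs N : ℕ)) / N) atTop (𝓝 0) := by
  simp_rw [← tsum_div_const, mul_div_assoc]
  have hterm (s : ℤ) :
      Tendsto (fun N : ℕ => d s * ((min s.natAbs N : ℕ) / (N : ℝ))) atTop (𝓝 0) := by
    rw [← mul_zero (d s)]
    refine ((tendsto_const_div_atTop_nhds_zero_nat (s.natAbs : ℝ)).congr' ?_).const_mul _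
    filter_upwards [eventually_ge_atTop s.natAbs] with N hN
    rw [min_eq_left hN]
  have hbound (N : ℕ) (s : ℤ) : ‖d s * ((min s.natAbs N : ℕ) / (N : ℝ))‖ ≤ |d s| := by
    have hmin : ((min s.natAbs N : ℕ) : ℝ) ≤ N := by exact_mod_cast min_le_right _ _
    have h01 : 0 ≤ ((min s.natAbs N : ℕ) / (N : ℝ)) := by positivity
    rw [norm_mul, Real.norm_eq_abs, Real.norm_of_nonneg h01]
    exact mul_le_of_le_one_right (abs_nonneg _) (div_le_one_of_le₀ hmin N.cast_nonneg)
  simpa using tendsto_tsum_of_dominated_convergence (summable_abs_iff.2 hd) hterm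
    (Eventually.of_forall hbound)

end DiagonalMajorant

theorem summable_mul_sub_of_nonneg {G : Type*} [AddCommGroup G] {a b : G → ℝ} (ha0 : 0 ≤ a)
    (hb0 : 0 ≤ b) (ha : Summable a) (hb : Summable b) :
    Summable fun p : G × G => a p.2 * b (p.1 - p.2) := by
  let e : G × G ≃ G × G :=
    { toFun p := (p.2, p.1 - p.2)
      invFun q := (q.1 + q.2, q.1)
      left_inv p := by simp
      right_inv q := by simp }
  exact e.summable_iff.2 (ha.mul_of_nonneg hb ha0 hb0)

theorem Wmat_eq_inner (T : HT →L[ℂ] HT) (j k : ℤ) :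
    Wmat T j k = ⟪fourierBasis j, T (fourierBasis k)⟫_ℂ :=
  fourierBasis.repr_apply_apply _ _

theorem Wmat_adjoint (T : HT →L[ℂ] HT) (j k : ℤ) : Wmat (adjoint T) j k = conj (Wmat T k j) := by
  rw [Wmat_eq_inner, Wmat_eq_inner, ContinuousLinearMap.adjoint_inner_right, inner_conj_symm]

theorem norm_Wmat_le (T : HT →L[ℂ] HT) (j k : ℤ) : ‖Wmat T j k‖ ≤ ‖T‖ := by
  have he (i : ℤ) : ‖(fourierBasis i : HT)‖ = 1 := fourierBasis.orthonormal.1 i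
  calc ‖Wmat T j k‖ ≤ ‖(fourierBasis j : HT)‖ * ‖T (fourierBasis k)‖ := by
        rw [Wmat_eq_inner]; exact norm_inner_le_norm _ _
    _ ≤ ‖T‖ := by simpa only [he, one_mul, mul_one] using T.le_opNorm (fourierBasis k)

theorem hasSum_norm_sq_Wmat_col (T : HT →L[ℂ] HT) (k : ℤ) :
    HasSum (fun j => ‖Wmat T j k‖ ^ 2) (‖T (fourierBasis k)‖ ^ 2) :=
  fourierBasis.hasSum_norm_sq_repr _

theorem hasSum_norm_sq_Wmat_row (T : HT →L[ℂ] HT) (j : ℤ) :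
    HasSum (fun k => ‖Wmat T j k‖ ^ 2) (‖adjoint T (fourierBasis j)‖ ^ 2) := by
  simpa only [Wmat_adjoint, RCLike.norm_conj] using hasSum_norm_sq_Wmat_col (adjoint T) j

theorem hasSum_Wmat_comp (S T : HT →L[ℂ] HT) (j k : ℤ) :
    HasSum (fun i => Wmat S j i * Wmat T i k) (Wmat (S ∘L T) j k) := by
  have := (fourierBasis.hasSum_repr (T (fourierBasis k))).mapL ((innerSL ℂ (fourierBasis j)) ∘L S)
  simp only [ContinuousLinearMap.comp_apply, map_smul, innerSL_apply_apply, smul_eq_mul,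
    ← Wmat_eq_inner] at this
  rw [Wmat_eq_inner, ContinuousLinearMap.comp_apply]
  exact this.congr_fun fun i => mul_comm _ _

theorem IsDT.adjoint {T : HT →L[ℂ] HT} (hT : IsDT T) : IsDT (adjoint T) := by
  obtain ⟨c, hc0, hc, hTc⟩ := hT
  refine ⟨fun s => c (-s), fun s => hc0 _, (Equiv.neg ℤ).summable_iff.2 hc, fun j k => ?_⟩
  rw [Wmat_adjoint, RCLike.norm_conj]
  simpa only [neg_sub] using hTc k j

theorem IsDT.comp {S T : HT →L[ℂ] HT} (hS : IsDT S) (hT : IsDT T) : IsDT (S ∘L T) := by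
  obtain ⟨a, ha0, ha, hSa⟩ := hS
  obtain ⟨b, hb0, hb, hTb⟩ := hT
  have hconv := summable_mul_sub_of_nonneg ha0 hb0 ha hb
  refine ⟨fun s => ∑' t, a t * b (s - t), fun s => tsum_nonneg fun t => mul_nonneg (ha0 t) (hb0 _),
    hconv.prod, fun j k => ?_⟩
  have hmajorant : HasSum (fun i => a (j - i) * b (i - k)) (∑' t, a t * b (j - k - t)) := by
    have := (Equiv.subLeft j).hasSum_iff.2 (hconv.prod_factor (j - k)).hasSum
    simpa only [Function.comp_def, Equiv.subLeft_apply, sub_sub_sub_cancel_left] using this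
  refine (hasSum_Wmat_comp S T j k).norm_le_of_bounded hmajorant fun i => ?_
  rw [norm_mul]
  exact mul_le_mul (hSa j i) (hTb i k) (norm_nonneg _) (ha0 _)

theorem IsDT.exists_norm_sq_Wmat_le {T : HT →L[ℂ] HT} (hT : IsDT T) :
    ∃ d : ℤ → ℝ, Summable d ∧ ∀ j k, ‖Wmat T j k‖ ^ 2 ≤ d (j - k) := by
  obtain ⟨c, -, hc, hTc⟩ := hT
  refine ⟨fun s => ‖T‖ * c s, hc.mul_left _, fun j k => ?_⟩
  rw [sq]
  exact mul_le_mul (norm_Wmat_le T j k) (hTc j k) (norm_nonneg _) (norm_nonneg _)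

noncomputable def rowAverage (T : HT →L[ℂ] HT) (p : ℤ × ℕ) : ℝ :=
  (1 / (p.2 : ℝ)) * ∑ l ∈ Finset.Ico p.1 (p.1 + (p.2 : ℤ)), ∑' j : ℤ, ‖Wmat T l j‖ ^ 2

theorem bT_eq_limsup_rowAverage (T : HT →L[ℂ] HT) :
    bT T = limsup (rowAverage T) (comap Prod.snd atTop) := rfl

theorem rowAverage_nonneg (T : HT →L[ℂ] HT) (p : ℤ × ℕ) : 0 ≤ rowAverage T p :=
  mul_nonneg (by positivity) (sum_nonneg fun _ _ => tsum_nonneg fun _ => by positivity)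

theorem rowAverage_le (T : HT →L[ℂ] HT) (p : ℤ × ℕ) : rowAverage T p ≤ ‖T‖ ^ 2 := by
  obtain ⟨a, N⟩ := p
  have hrow (l : ℤ) : ∑' j, ‖Wmat T l j‖ ^ 2 ≤ ‖T‖ ^ 2 := by
    rw [(hasSum_norm_sq_Wmat_row T l).tsum_eq, ← adjoint.norm_map T]
    have := (adjoint T).le_opNorm (fourierBasis l)
    rw [fourierBasis.orthonormal.1 l, mul_one] at this
    gcongr
  calc rowAverage T (a, N) ≤ (1 / (N : ℝ)) * ∑ l ∈ Ico a (a + (N : ℤ)), ‖T‖ ^ 2 :=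
        mul_le_mul_of_nonneg_left (sum_le_sum fun l _ => hrow l) (by positivity)
    _ ≤ ‖T‖ ^ 2 := by
        rcases N.eq_zero_or_pos with rfl | hN
        · simp
        · have hcard : #(Ico a (a + (N : ℤ))) = N := by simp
          rw [sum_const, hcard, nsmul_eq_mul, ← mul_assoc, one_div_mul_cancel (by positivity),
            one_mul]

theorem tendsto_rowAverage_sub {S T : HT →L[ℂ] HT} (hS : IsDT S) (hT : IsDT T)
    (hST : ∀ k, ‖S (fourierBasis k)‖ = ‖T (fourierBasis k)‖) :
    Tendsto (rowAverage S - rowAverage T) (comap Prod.snd atTop) (𝓝 0) := by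
  obtain ⟨dS, hdS, hSd⟩ := hS.exists_norm_sq_Wmat_le
  obtain ⟨dT, hdT, hTd⟩ := hT.exists_norm_sq_Wmat_le
  have hclose (a : ℤ) (N : ℕ) : |rowAverage S (a, N) - rowAverage T (a, N)| ≤
      (∑' s, dS s * (min s.natAbs N : ℕ)) / N + (∑' s, dT s * (min s.natAbs N : ℕ)) / N := by
    have hcol : ∑ k ∈ Ico a (a + N), ∑' j, ‖Wmat S j k‖ ^ 2 =
        ∑ k ∈ Ico a (a + N), ∑' j, ‖Wmat T j k‖ ^ 2 := by
      simp only [(hasSum_norm_sq_Wmat_col _ _).tsum_eq, hST]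
    have hS' := abs_sum_tsum_sub_sum_tsum_Ico_le (fun _ _ => by positivity) hdS hSd a N
    have hT' := abs_sum_tsum_sub_sum_tsum_Ico_le (fun _ _ => by positivity) hdT hTd a N
    rw [hcol] at hS'
    rw [rowAverage, rowAverage, ← mul_sub, abs_mul, abs_of_nonneg (by positivity), ← add_div,
      one_div_mul_eq_div]
    gcongr
    exact (abs_sub_le _ _ _).trans (add_le_add hS' (by rwa [abs_sub_comm]))
  refine squeeze_zero_norm (fun p => hclose p.1 p.2) ?_
  rw [← add_zero (0 : ℝ)]
  exact ((tendsto_tsum_mul_min_natAbs_div hdS).add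
    (tendsto_tsum_mul_min_natAbs_div hdT)).comp tendsto_comap

theorem bT_eq_of_norm_map_eq {S T : HT →L[ℂ] HT} (hS : IsDT S) (hT : IsDT T)
    (hST : ∀ k, ‖S (fourierBasis k)‖ = ‖T (fourierBasis k)‖) : bT S = bT T := by
  have : (comap Prod.snd atTop : Filter (ℤ × ℕ)).NeBot :=
    NeBot.comap_of_surj inferInstance Prod.snd_surjective
  rw [bT_eq_limsup_rowAverage, bT_eq_limsup_rowAverage]
  exact limsup_eq_limsup_of_tendsto_sub (isBoundedUnder_of ⟨_, rowAverage_le S⟩)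
    (isBoundedUnder_of ⟨0, rowAverage_nonneg S⟩) (isBoundedUnder_of ⟨_, rowAverage_le T⟩)
    (isBoundedUnder_of ⟨0, rowAverage_nonneg T⟩) (tendsto_rowAverage_sub hS hT hST)

theorem bT_isometry_comp {T U : HT →L[ℂ] HT} (hT : IsDT T) (hU : IsDT U)
    (hUiso : ∀ x, ‖U x‖ = ‖x‖) : bT (U ∘L T) = bT T :=
  bT_eq_of_norm_map_eq (hU.comp hT) hT fun _ => hUiso _

theorem bT_comp_coisometry (T : HT →L[ℂ] HT) {U : HT →L[ℂ] HT}
    (hU : ∀ x, ‖adjoint U x‖ = ‖x‖) : bT (T ∘L U) = bT T := by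
  have hrow (l : ℤ) : ∑' j, ‖Wmat (T ∘L U) l j‖ ^ 2 = ∑' j, ‖Wmat T l j‖ ^ 2 := by
    rw [(hasSum_norm_sq_Wmat_row _ l).tsum_eq, (hasSum_norm_sq_Wmat_row _ l).tsum_eq,
      adjoint_comp, ContinuousLinearMap.comp_apply, hU]
  have hrowAverage : rowAverage (T ∘L U) = rowAverage T := by
    funext p
    simp only [rowAverage, hrow]
  rw [bT_eq_limsup_rowAverage, bT_eq_limsup_rowAverage, hrowAverage]

theorem bT_mul_unitary (W U : HT →L[ℂ] HT)
    (hW : IsDT W) (hU : IsDT U)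
    (hUiso : ∀ f : HT, ‖U f‖ = ‖f‖) (hUsurj : Function.Surjective U) :
    bT (W.comp U) = bT W ∧ bT (U.comp W) = bT W ∧
    (∀ V : HT →L[ℂ] HT, U.comp V = ContinuousLinearMap.id ℂ HT →
      V.comp U = ContinuousLinearMap.id ℂ HT →
      bT (V.comp (W.comp U)) = bT W) := by
  have hUU : adjoint U ∘L U = 1 := (U.norm_map_iff_adjoint_comp_self).1 hUiso
  have hUco (x : HT) : ‖adjoint U x‖ = ‖x‖ := by
    obtain ⟨y, rfl⟩ := hUsurj x
    rw [← ContinuousLinearMap.comp_apply, hUU]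
    exact (hUiso y).symm
  refine ⟨bT_comp_coisometry W hUco, bT_isometry_comp hW hU hUiso, fun V hUV _ => ?_⟩
  have hV : V = adjoint U := by
    rw [← ContinuousLinearMap.id_comp V, ← ContinuousLinearMap.one_def, ← hUU,
      ContinuousLinearMap.comp_assoc, hUV, ContinuousLinearMap.comp_id]
  rw [hV, ← ContinuousLinearMap.comp_assoc, bT_comp_coisometry _ hUco,
    bT_isometry_comp hW hU.adjoint hUco]

end MuNorm
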